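/- Stabilization of non-recursive predicates: if the least models of the partial materialisations D_{k-1} and D_k = coal(D_{k-1} ∪ Π[D_{k-1}]) satisfy exactly the same facts over predicates that are non-recursive in Π, then for every ordinal α ≥ k, T_Π^α(I_D) and T_Π^k(I_D) satisfy exactly the same facts over non-recursive predicates; in particular D_k already satisfies every fact over a non-recursive predicate entailed by Π and D. -/

import Mathlib

/-! # A formalisation of basic DatalogMTL notions (ground setting) -/

/-- An interval is an order-convex subset of `ℚ`. -/
def IsInterval (s : Set ℚ) : Prop :=
  ∀ t1 t2 t3 : ℚ, t1 < t2 → t2 < t3 → t1 ∈ s → t3 ∈ s → t2 ∈ s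

/-- Interpretations assign to each rational time point a set of ground relational atoms. -/
abbrev Interp (Atom : Type) := ℚ → Set Atom

/-- Ground metric atoms. -/
inductive MA (Atom : Type) where
  | top : MA Atom
  | bot : MA Atom
  | atom (A : Atom) : MA Atom
  | dminus (ρ : Set ℚ) (M : MA Atom) : MA Atom
  | dplus (ρ : Set ℚ) (M : MA Atom) : MA Atom
  | bminus (ρ : Set ℚ) (M : MA Atom) : MA Atom
  | bplus (ρ : Set ℚ) (M : MA Atom) : MA Atom
  | since (ρ : Set ℚ) (M1 M2 : MA Atom) : MA Atom
  | untl (ρ : Set ℚ) (M1 M2 : MA Atom) : MA Atom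

variable {Atom : Type}

/-- Satisfaction of ground metric atoms at a time point. -/
def sat (I : Interp Atom) : ℚ → MA Atom → Prop
  | _, .top => True
  | _, .bot => False
  | t, .atom A => A ∈ I t
  | t, .dminus ρ M => ∃ t', t - t' ∈ ρ ∧ sat I t' M
  | t, .dplus ρ M => ∃ t', t' - t ∈ ρ ∧ sat I t' M
  | t, .bminus ρ M => ∀ t', t - t' ∈ ρ → sat I t' M
  | t, .bplus ρ M => ∀ t', t' - t ∈ ρ → sat I t' M
  | t, .since ρ M1 M2 =>
      ∃ t', t - t' ∈ ρ ∧ sat I t' M2 ∧ ∀ t'', t' < t'' → t'' < t → sat I t'' M1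
  | t, .untl ρ M1 M2 =>
      ∃ t', t' - t ∈ ρ ∧ sat I t' M2 ∧ ∀ t'', t < t'' → t'' < t' → sat I t'' M1

/-- Ground rule heads, generated by `⊥ | A | ⊟ρ | ⊞ρ`. -/
inductive Hd (Atom : Type) where
  | bot : Hd Atom
  | atom (A : Atom) : Hd Atom
  | bminus (ρ : Set ℚ) (h : Hd Atom) : Hd Atom
  | bplus (ρ : Set ℚ) (h : Hd Atom) : Hd Atom

/-- The metric atom corresponding to a head. -/
def Hd.toMA : Hd Atom → MA Atom
  | .bot => .bot
  | .atom A => .atom A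
  | .bminus ρ h => .bminus ρ h.toMA
  | .bplus ρ h => .bplus ρ h.toMA

/-- Whether a head mentions `⊥` (i.e. the rule is a `⊥`-rule). -/
def Hd.isBot : Hd Atom → Prop
  | .bot => True
  | .atom _ => False
  | .bminus _ h => h.isBot
  | .bplus _ h => h.isBot

/-- The relational atom occurring in a head (none for `⊥`-heads). -/
def Hd.atomOf : Hd Atom → Option Atom
  | .bot => none
  | .atom A => some A
  | .bminus _ h => h.atomOf
  | .bplus _ h => h.atomOf

/-- A ground rule with a non-empty body. -/
structure Rule (Atom : Type) where
  head : Hd Atom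
  body : List (MA Atom)
  body_ne : body ≠ []

/-- `Forces h t A t'` : satisfying head `h` at time `t` requires atom `A` at time `t'`. -/
inductive Forces : Hd Atom → ℚ → Atom → ℚ → Prop where
  | atom (A : Atom) (t : ℚ) : Forces (.atom A) t A t
  | bminus {h : Hd Atom} {s A t'} (ρ : Set ℚ) (t : ℚ) :
      t - s ∈ ρ → Forces h s A t' → Forces (.bminus ρ h) t A t'
  | bplus {h : Hd Atom} {s A t'} (ρ : Set ℚ) (t : ℚ) :
      s - t ∈ ρ → Forces h s A t' → Forces (.bplus ρ h) t A t'

/-- The immediate consequence operator: the least interpretation containing `I` and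
satisfying the head of every non-`⊥` ground rule at every time point where `I`
satisfies all its body atoms. -/
def TP (Φ : Set (Rule Atom)) (I : Interp Atom) : Interp Atom :=
  fun t => I t ∪
    {A | ∃ r ∈ Φ, ¬ r.head.isBot ∧
      ∃ t0, (∀ M ∈ r.body, sat I t0 M) ∧ Forces r.head t0 A t}

/-- A fact `M@ρ` : a ground relational atom together with an interval. -/
abbrev DFact (Atom : Type) := Atom × Set ℚ

abbrev Dataset (Atom : Type) := Set (DFact Atom)

/-- The least model of a dataset. -/
def leastModel (D : Dataset Atom) : Interp Atom :=
  fun t => {A | ∃ ρ, (A, ρ) ∈ D ∧ t ∈ ρ}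

/-- `D ⊨ M@ρ`. -/
def dsat (D : Dataset Atom) (M : MA Atom) (ρ : Set ℚ) : Prop :=
  ∀ t ∈ ρ, sat (leastModel D) t M

def modelsRule (I : Interp Atom) (r : Rule Atom) : Prop :=
  ∀ t, (∀ M ∈ r.body, sat I t M) → sat I t r.head.toMA

def modelsProg (I : Interp Atom) (Φ : Set (Rule Atom)) : Prop :=
  ∀ r ∈ Φ, modelsRule I r

def modelsData (I : Interp Atom) (D : Dataset Atom) : Prop :=
  ∀ F ∈ D, ∀ t ∈ F.2, F.1 ∈ I t

def consistent (Φ : Set (Rule Atom)) (D : Dataset Atom) : Prop :=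
  ∃ I, modelsProg I Φ ∧ modelsData I D

/-- `Φ, D ⊨ A@ρ`. -/
def entailsFact (Φ : Set (Rule Atom)) (D : Dataset Atom) (A : Atom) (ρ : Set ℚ) : Prop :=
  ∀ I, modelsProg I Φ → modelsData I D → ∀ t ∈ ρ, A ∈ I t

/-- Transfinite iteration of an operator on interpretations, taking unions at limits. -/
noncomputable def iterT (T : Interp Atom → Interp Atom) (I0 : Interp Atom) :
    Ordinal → Interp Atom :=
  fun o =>
    Ordinal.limitRecOn o I0 (fun _ ih => T ih)
      (fun o _ ih => fun t => {A | ∃ o', ∃ h : o' < o, A ∈ ih o' h t})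

/-- The first uncountable ordinal. -/
noncomputable def omega1 : Ordinal := (Cardinal.aleph 1).ord

/-- One coalescing step: replace two facts over the same atom whose intervals are
union-compatible by their union. -/
def CoalStep (D D' : Dataset Atom) : Prop :=
  ∃ A ρ1 ρ2, (A, ρ1) ∈ D ∧ (A, ρ2) ∈ D ∧
    IsInterval ρ1 ∧ IsInterval ρ2 ∧ IsInterval (ρ1 ∪ ρ2) ∧ ¬ (ρ1 = ρ2) ∧
    D' = (D \ {(A, ρ1), (A, ρ2)}) ∪ {(A, ρ1 ∪ ρ2)}

/-- `D'` is the result of exhaustively coalescing `E`. -/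
def coalescedFrom (E D' : Dataset Atom) : Prop :=
  Relation.ReflTransGen CoalStep E D' ∧ ∀ E', ¬ CoalStep D' E'

/-- `ρ` is a subset-maximal interval on which `D` satisfies `M`. -/
def maxSat (D : Dataset Atom) (M : MA Atom) (ρ : Set ℚ) : Prop :=
  IsInterval ρ ∧ dsat D M ρ ∧
    ∀ ρ', IsInterval ρ' → dsat D M ρ' → ρ ⊆ ρ' → ρ' = ρ

/-- Semantic entailment `M@ρ0 ⊨ A@ρ` between a metric fact and a relational fact. -/
def mfEntails (M : MA Atom) (ρ0 : Set ℚ) (A : Atom) (ρ : Set ℚ) : Prop :=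
  ∀ I : Interp Atom, (∀ s ∈ ρ0, sat I s M) → ∀ t ∈ ρ, A ∈ I t

/-- An instance of rule `r` for dataset `D` : a list of subset-maximal intervals
for the body atoms. -/
def instOf (r : Rule Atom) (D : Dataset Atom) (ρs : List (Set ℚ)) : Prop :=
  List.Forall₂ (fun M ρ => maxSat D M ρ) r.body ρs

/-- The intersection of a list of intervals. -/
def interList (ρs : List (Set ℚ)) : Set ℚ := ρs.foldr (· ∩ ·) Set.univ

/-- The set of facts derived by rule `r` from dataset `D`. -/
def der (r : Rule Atom) (D : Dataset Atom) : Dataset Atom :=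
  {F | ¬ r.head.isBot ∧ r.head.atomOf = some F.1 ∧
    ∃ ρs, instOf r D ρs ∧
      mfEntails r.head.toMA (interList ρs) F.1 F.2 ∧ IsInterval F.2 ∧
      ∀ ρ', IsInterval ρ' → mfEntails r.head.toMA (interList ρs) F.1 ρ' →
        F.2 ⊆ ρ' → ρ' = F.2}

/-- `Φ[D]`: facts derived from `D` by a one-step application of `Φ`. -/
def progApply (Φ : Set (Rule Atom)) (D : Dataset Atom) : Dataset Atom :=
  {F | ∃ r ∈ Φ, F ∈ der r D}

/-- Instances of `r` for `D` relative to `Δ`. -/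
def instOfRel (r : Rule Atom) (D Δ : Dataset Atom) (ρs : List (Set ℚ)) : Prop :=
  instOf r D ρs ∧ ∃ p ∈ r.body.zip ρs, ¬ dsat (D \ Δ) p.1 p.2

/-- Facts derived by `r` from `D` relative to `Δ`. -/
def derRel (r : Rule Atom) (D Δ : Dataset Atom) : Dataset Atom :=
  {F | ¬ r.head.isBot ∧ r.head.atomOf = some F.1 ∧
    ∃ ρs, instOfRel r D Δ ρs ∧
      mfEntails r.head.toMA (interList ρs) F.1 F.2 ∧ IsInterval F.2 ∧
      ∀ ρ', IsInterval ρ' → mfEntails r.head.toMA (interList ρs) F.1 ρ' →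
        F.2 ⊆ ρ' → ρ' = F.2}

/-- `Φ[D ⋮ Δ]`: one-step semina\"ive application. -/
def progApplyRel (Φ : Set (Rule Atom)) (D Δ : Dataset Atom) : Dataset Atom :=
  {F | ∃ r ∈ Φ, F ∈ derRel r D Δ}

/-- A relational fact entails another relational fact. -/
def dfactEntails (F G : DFact Atom) : Prop := F.1 = G.1 ∧ G.2 ⊆ F.2

/-- A dataset entails a relational fact. -/
def factEntailedBy (E : Dataset Atom) (G : DFact Atom) : Prop :=
  ∀ t ∈ G.2, G.1 ∈ leastModel E t

/-- Atoms occurring in a metric atom. -/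
def atomsMA : MA Atom → Set Atom
  | .top => ∅
  | .bot => ∅
  | .atom A => {A}
  | .dminus _ M => atomsMA M
  | .dplus _ M => atomsMA M
  | .bminus _ M => atomsMA M
  | .bplus _ M => atomsMA M
  | .since _ M1 M2 => atomsMA M1 ∪ atomsMA M2
  | .untl _ M1 M2 => atomsMA M1 ∪ atomsMA M2

/-- Atoms occurring in a head. -/
def atomsHd : Hd Atom → Set Atom
  | .bot => ∅
  | .atom A => {A}
  | .bminus _ h => atomsHd h
  | .bplus _ h => atomsHd h

/-- Atoms occurring in a rule. -/
def atomsRule (r : Rule Atom) : Set Atom :=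
  atomsHd r.head ∪ {A | ∃ M ∈ r.body, A ∈ atomsMA M}

section Predicates

variable {Pred : Type} (Φ : Set (Rule Atom)) (pr : Atom → Pred)

/-- Edge `(Q, R)` of the dependency graph: some rule mentions `Q` in the body
and `R` in the head. -/
def Edge (Q R : Pred) : Prop :=
  ∃ r ∈ Φ, (∃ M ∈ r.body, ∃ A ∈ atomsMA M, pr A = Q) ∧ ∃ A ∈ atomsHd r.head, pr A = R

/-- A predicate is recursive in `Φ` if some path including a cycle ends in it. -/
def RecursivePred (P : Pred) : Prop :=
  ∃ Q, Relation.TransGen (Edge Φ pr) Q Q ∧ Relation.ReflTransGen (Edge Φ pr) Q P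

/-- A rule `r` is `P`-relevant in `Φ`. -/
def PRelevant (P : Pred) (r : Rule Atom) : Prop :=
  ∃ r' ∈ Φ, (r'.head.isBot ∨ ∃ A ∈ atomsHd r'.head, pr A = P) ∧
    ∃ Qh, (∃ A ∈ atomsHd r.head, pr A = Qh) ∧
      ∃ Qb, (∃ M ∈ r'.body, ∃ B ∈ atomsMA M, pr B = Qb) ∧
        Relation.ReflTransGen (Edge Φ pr) Qh Qb

/-- Predicates occurring in a program. -/
def predsOfProg (Φ' : Set (Rule Atom)) : Set Pred :=
  {P | ∃ r ∈ Φ', ∃ A ∈ atomsRule r, pr A = P}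

end Predicates

/-- An interval containing only non-negative rationals. -/
def NonnegInt (ρ : Set ℚ) : Prop := ∀ q ∈ ρ, 0 ≤ q

/-- Metric atoms mentioning only past operators (no `⊤`, `⊥`). -/
def pastOnly : MA Atom → Prop
  | .atom _ => True
  | .dminus ρ M => NonnegInt ρ ∧ pastOnly M
  | .bminus ρ M => NonnegInt ρ ∧ pastOnly M
  | .since ρ M1 M2 => NonnegInt ρ ∧ pastOnly M1 ∧ pastOnly M2
  | _ => False

/-- Heads mentioning only future operators (no `⊥`). -/
def futureHead : Hd Atom → Prop
  | .atom _ => True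
  | .bplus ρ h => NonnegInt ρ ∧ futureHead h
  | _ => False

/-- A forward-propagating program. -/
def ForwardProp (Φ : Set (Rule Atom)) : Prop :=
  ∀ r ∈ Φ, futureHead r.head ∧ ∀ M ∈ r.body, pastOnly M


section Aux

variable {Atom : Type}

lemma sat_mono' {I J : Interp Atom} (M : MA Atom)
    (h : ∀ A ∈ atomsMA M, ∀ s, A ∈ I s → A ∈ J s) :
    ∀ t, sat I t M → sat J t M := by
  induction M with
  | top => intro t _; trivial
  | bot => intro t h'; exact h'
  | atom A => intro t hA; exact h A rfl _ hA
  | dminus ρ M ih =>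
      rintro t ⟨t', h1, h2⟩; exact ⟨t', h1, ih h t' h2⟩
  | dplus ρ M ih =>
      rintro t ⟨t', h1, h2⟩; exact ⟨t', h1, ih h t' h2⟩
  | bminus ρ M ih =>
      intro t hs t' ht'; exact ih h t' (hs t' ht')
  | bplus ρ M ih =>
      intro t hs t' ht'; exact ih h t' (hs t' ht')
  | since ρ M1 M2 ih1 ih2 =>
      rintro t ⟨t', h1, h2, h3⟩
      exact ⟨t', h1, ih2 (fun A hA => h A (Or.inr hA)) t' h2,
        fun t'' ha hb => ih1 (fun A hA => h A (Or.inl hA)) t'' (h3 t'' ha hb)⟩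
  | untl ρ M1 M2 ih1 ih2 =>
      rintro t ⟨t', h1, h2, h3⟩
      exact ⟨t', h1, ih2 (fun A hA => h A (Or.inr hA)) t' h2,
        fun t'' ha hb => ih1 (fun A hA => h A (Or.inl hA)) t'' (h3 t'' ha hb)⟩

lemma Forces_mem_head {h : Hd Atom} {t0 : ℚ} {A : Atom} {t : ℚ}
    (hf : Forces h t0 A t) : A ∈ atomsHd h := by
  induction hf with
  | atom => exact rfl
  | bminus _ _ _ _ ih => exact ih
  | bplus _ _ _ _ ih => exact ih

lemma nonrec_body {Pred : Type} (Φ : Set (Rule Atom)) (pr : Atom → Pred)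
    {r : Rule Atom} (hr : r ∈ Φ) {A : Atom} (hA : A ∈ atomsHd r.head)
    (hnr : ¬ RecursivePred Φ pr (pr A)) {M : MA Atom} (hM : M ∈ r.body)
    {B : Atom} (hB : B ∈ atomsMA M) : ¬ RecursivePred Φ pr (pr B) := by
  rintro ⟨Q, hcyc, hpath⟩
  exact hnr ⟨Q, hcyc, hpath.tail ⟨r, hr, ⟨M, hM, B, hB, rfl⟩, ⟨A, hA, rfl⟩⟩⟩

lemma iterT_succ (T : Interp Atom → Interp Atom) (I0 : Interp Atom) (o : Ordinal) :
    iterT T I0 (Order.succ o) = T (iterT T I0 o) := by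
  simp [iterT, Ordinal.limitRecOn_succ]

lemma iterT_limit (T : Interp Atom → Interp Atom) (I0 : Interp Atom) {o : Ordinal}
    (ho : Order.IsSuccLimit o) :
    iterT T I0 o = fun t => {A | ∃ o', ∃ _ : o' < o, A ∈ iterT T I0 o' t} := by
  simp [iterT, Ordinal.limitRecOn_limit _ _ _ _ ho]

lemma iterT_mono (T : Interp Atom → Interp Atom)
    (hT : ∀ I t, I t ⊆ T I t) (I0 : Interp Atom) :
    ∀ o', ∀ o ≤ o', ∀ t, iterT T I0 o t ⊆ iterT T I0 o' t := by
  intro o'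
  induction o' using Ordinal.induction with
  | h o' IH =>
    intro o ho t A hA
    rcases eq_or_lt_of_le ho with rfl | hlt
    · exact hA
    rcases Ordinal.zero_or_succ_or_isSuccLimit o' with h0 | ⟨b, hb⟩ | hlim
    · exact absurd (h0 ▸ hlt) (not_lt_zero (a := o))
    · subst hb
      rw [iterT_succ]
      exact hT _ _ (IH b (Order.lt_succ b) o (Order.lt_succ_iff.mp hlt) t hA)
    · rw [iterT_limit T I0 hlim]
      exact ⟨o, hlt, hA⟩

lemma TP_infl (Φ : Set (Rule Atom)) : ∀ I t, I t ⊆ TP Φ I t :=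
  fun _ _ _ hA => Or.inl hA

universe u

lemma iterT_natCast (T : Interp Atom → Interp Atom) (I0 : Interp Atom) (n : ℕ) :
    iterT T I0 ((n : ℕ) : Ordinal.{u}) = T^[n] I0 := by
  induction n with
  | zero =>
      simp only [Nat.cast_zero, Function.iterate_zero, id]
      simp [iterT]
  | succ n ih =>
      rw [Nat.cast_succ, Ordinal.add_one_eq_succ, iterT_succ, ih,
        Function.iterate_succ_apply']

lemma stab_aux {Pred : Type} (Φ : Set (Rule Atom)) (pr : Atom → Pred)
    (D : Dataset Atom) (k : ℕ)
    (hyp : ∀ (t : ℚ) (A : Atom), ¬ RecursivePred Φ pr (pr A) →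
      (A ∈ (TP Φ)^[k] (leastModel D) t ↔ A ∈ (TP Φ)^[k+1] (leastModel D) t)) :
    ∀ α : Ordinal.{u}, (k : Ordinal.{u}) ≤ α → ∀ (t : ℚ) (A : Atom),
      ¬ RecursivePred Φ pr (pr A) →
      A ∈ iterT (TP Φ) (leastModel D) α t →
      A ∈ iterT (TP Φ) (leastModel D) (k : Ordinal.{u}) t := by
  intro α
  induction α using Ordinal.induction with
  | h α IH =>
    intro hk t A hnr hA
    rcases eq_or_lt_of_le hk with rfl | hlt
    · exact hA
    rcases Ordinal.zero_or_succ_or_isSuccLimit α with h0 | ⟨b, hb⟩ | hlim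
    · exact absurd (h0 ▸ hlt) not_lt_zero
    · subst hb
      have hkb : (k : Ordinal) ≤ b := Order.lt_succ_iff.mp hlt
      rw [iterT_succ] at hA
      rcases hA with hA | ⟨r, hr, hnb, t0, hbody, hforce⟩
      · exact IH b (Order.lt_succ b) hkb t A hnr hA
      · have hAh : A ∈ atomsHd r.head := Forces_mem_head hforce
        have hbody' : ∀ M ∈ r.body, sat (iterT (TP Φ) (leastModel D) (k : Ordinal)) t0 M := by
          intro M hM
          refine sat_mono' M ?_ t0 (hbody M hM)
          intro B hB s hBs
          exact IH b (Order.lt_succ b) hkb s B (nonrec_body Φ pr hr hAh hnr hM hB) hBs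
        have : A ∈ iterT (TP Φ) (leastModel D) (Order.succ (k : Ordinal)) t := by
          rw [iterT_succ]
          exact Or.inr ⟨r, hr, hnb, t0, hbody', hforce⟩
        rw [← Ordinal.add_one_eq_succ, ← Nat.cast_succ, iterT_natCast] at this
        rw [iterT_natCast]
        exact (hyp t A hnr).mpr this
    · rw [iterT_limit _ _ hlim] at hA
      rcases hA with ⟨o', ho', hA⟩
      rcases le_or_gt o' (k : Ordinal) with h | h
      · exact iterT_mono (TP Φ) (TP_infl Φ) (leastModel D) (k : Ordinal) o' h t hA
      · exact IH o' ho' h.le t A hnr hA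

end Aux

/-- stabilisation of non-recursive predicates. -/
theorem nonrecursive_stabilize {Atom Pred : Type} (Φ : Set (Rule Atom)) (pr : Atom → Pred)
    (D : Dataset Atom) (hΦ : Φ.Finite) (hD : D.Finite) (k : ℕ)
    (hyp : ∀ (t : ℚ) (A : Atom), ¬ RecursivePred Φ pr (pr A) →
      (A ∈ iterT (TP Φ) (leastModel D) (k : Ordinal) t ↔
        A ∈ iterT (TP Φ) (leastModel D) ((k : Ordinal) + 1) t)) :
    (∀ α : Ordinal, (k : Ordinal) ≤ α → ∀ (t : ℚ) (A : Atom),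
      ¬ RecursivePred Φ pr (pr A) →
        (A ∈ iterT (TP Φ) (leastModel D) α t ↔
          A ∈ iterT (TP Φ) (leastModel D) (k : Ordinal) t)) ∧
    (∀ (t : ℚ) (A : Atom), ¬ RecursivePred Φ pr (pr A) →
      A ∈ iterT (TP Φ) (leastModel D) omega1 t →
        A ∈ iterT (TP Φ) (leastModel D) (k : Ordinal) t) := by
  have hyp' : ∀ (t : ℚ) (A : Atom), ¬ RecursivePred Φ pr (pr A) →
      (A ∈ (TP Φ)^[k] (leastModel D) t ↔ A ∈ (TP Φ)^[k+1] (leastModel D) t) := by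
    intro t A h
    have h2 := hyp t A h
    rwa [show ((k : Ordinal) + 1) = ((k + 1 : ℕ) : Ordinal) by push_cast; ring,
      iterT_natCast, iterT_natCast] at h2
  constructor
  · intro α hα t A hnr
    rw [iterT_natCast]
    constructor
    · intro hA
      have h3 := stab_aux Φ pr D k hyp' α hα t A hnr hA
      rwa [iterT_natCast] at h3
    · intro hA
      refine iterT_mono (TP Φ) (TP_infl Φ) (leastModel D) α (k : Ordinal) hα t ?_
      rwa [iterT_natCast]
  · intro t A hnr hA
    have hkw : ((k : ℕ) : Ordinal) ≤ omega1 := by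
      refine le_of_lt (Cardinal.lt_ord.mpr ?_)
      simp only [Ordinal.card_nat]
      exact lt_of_lt_of_le (Cardinal.nat_lt_aleph0 k) (Cardinal.aleph0_le_aleph 1)
    have h3 := stab_aux Φ pr D k hyp' omega1 hkw t A hnr hA
    rw [iterT_natCast]
    rwa [iterT_natCast] at h3
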